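/- Let (λ,μ) and (λ',μ') be bipartitions of n that are adjacent in the dominance order on bipartitions with (λ,μ) ⊴ (λ',μ') and (λ,μ) ≠ (λ',μ'). Then exactly one of the following holds: (a) μ = μ' and λ' is obtained from λ by increasing one part by 1 and decreasing a later part by 1; (b) λ = λ' and μ' is obtained from μ by increasing one part by 1 and decreasing a later part by 1; (c) |λ| < |λ'|, λ' is obtained from λ by increasing one part by 1, and μ' is obtained from μ by decreasing one part by 1. -/

import Mathlib

/-- Partial sum of the first `d` parts of a partition (given as a function). -/
def psum (f : ℕ → ℕ) (d : ℕ) : ℕ := ∑ i ∈ Finset.range d, f i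

/-- A bipartition of `n`: two weakly decreasing, eventually zero functions
whose total sums add up to `n`. -/
def IsBip (n : ℕ) (l m : ℕ → ℕ) : Prop :=
  Antitone l ∧ Antitone m ∧ (∃ N, ∀ i, N ≤ i → l i = 0) ∧
  (∃ N, ∀ i, N ≤ i → m i = 0) ∧ (∑ᶠ i, l i) + (∑ᶠ i, m i) = n

/-- Dominance order on bipartitions (Dipper–James–Murphy). -/
def BDom (l m l' m' : ℕ → ℕ) : Prop :=
  (∀ d, psum l d ≤ psum l' d) ∧
  ∀ d, (∑ᶠ i, l i) + psum m d ≤ (∑ᶠ i, l' i) + psum m' d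

/-- `f'` is obtained from `f` by increasing one part by 1 and decreasing a
later part by 1. -/
def IncDec (f f' : ℕ → ℕ) : Prop :=
  ∃ i j, i < j ∧ f' i = f i + 1 ∧ f' j + 1 = f j ∧
    ∀ t, t ≠ i → t ≠ j → f' t = f t

/-- `f'` is obtained from `f` by increasing one part by 1. -/
def IncOne (f f' : ℕ → ℕ) : Prop :=
  ∃ i, f' i = f i + 1 ∧ ∀ t, t ≠ i → f' t = f t

/-!
Write a bipartition `(λ, μ)` as the single sequence `λ₀, …, λ_{N-1}, μ₀, μ₁, …`, with `N` beyond
the supports of `λ` and `λ'`. Dominance of bipartitions becomes dominance of partial sums of these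
sequences, which range over the sequences antitone on `[0, N)` and on `[N, ∞)`. If `c ◁ c'`, let
`i` be the first index where they differ and `j + 1` the first index after `i` where their partial
sums meet again. Moving a unit of `c` from position `j` to position `i` keeps this block shape and
stays between `c` and `c'`, so adjacency forces the result to be `c'`. Whether `i` and `j` fall in
the `λ`-block or the `μ`-block gives the three cases.
-/

def Dom (c c' : ℕ → ℕ) : Prop := ∀ d, psum c d ≤ psum c' d

/-- Antitone on `[0, N)` and on `[N, ∞)`. -/
def BlockAntitone (N : ℕ) (c : ℕ → ℕ) : Prop := ∀ t, t + 1 ≠ N → c (t + 1) ≤ c t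

def bump (c : ℕ → ℕ) (i j : ℕ) : ℕ → ℕ :=
  fun t => if t = i then c t + 1 else if t = j then c t - 1 else c t

def concatAt (N : ℕ) (l m : ℕ → ℕ) : ℕ → ℕ := fun t => if t < N then l t else m (t - N)

lemma psum_succ (f : ℕ → ℕ) (d : ℕ) : psum f (d + 1) = psum f d + f d :=
  Finset.sum_range_succ f d

lemma finsum_eq_psum {f : ℕ → ℕ} {N : ℕ} (hf : ∀ t, N ≤ t → f t = 0) :
    ∑ᶠ t, f t = psum f N := by
  refine finsum_eq_sum_of_support_subset f fun t ht => ?_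
  by_contra h
  exact ht (hf t (by simpa using h))

lemma psum_eq_of_le {f : ℕ → ℕ} {N d : ℕ} (hf : ∀ t, N ≤ t → f t = 0) (hd : N ≤ d) :
    psum f d = psum f N := by
  rw [← finsum_eq_psum hf, ← finsum_eq_psum fun t ht => hf t (hd.trans ht)]

lemma psum_bump {c : ℕ → ℕ} {i j : ℕ} (hij : i < j) (hj : 1 ≤ c j) (d : ℕ) :
    psum (bump c i j) d = psum c d + if i < d ∧ d ≤ j then 1 else 0 := by
  induction d with
  | zero => simp [psum]
  | succ d ih =>
    rw [psum_succ, psum_succ, ih]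
    simp only [bump]
    obtain rfl | hdj := eq_or_ne d j
    · rw [if_neg hij.ne']
      split_ifs <;> omega
    · split_ifs <;> omega

lemma blockAntitone_bump {N i j : ℕ} {c : ℕ → ℕ} (hc : BlockAntitone N c) (hij : i < j)
    (hi : ∀ t, t + 1 = i → t + 1 ≠ N → c i < c t) (hj : j + 1 ≠ N → c (j + 1) < c j) :
    BlockAntitone N (bump c i j) := by
  intro t ht
  have hct := hc t ht
  have hit : t + 1 ≠ i ∨ c (t + 1) < c t := by
    by_cases h : t + 1 = i
    exacts [Or.inr (h ▸ hi t h ht), Or.inl h]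
  have hjt : t ≠ j ∨ c (t + 1) < c t := by
    by_cases h : t = j
    exacts [Or.inr (h ▸ hj (h ▸ ht)), Or.inl h]
  unfold bump
  split_ifs <;> omega

lemma exists_first_lt {c c' : ℕ → ℕ} (hle : Dom c c') (hne : c ≠ c') :
    ∃ i, c i < c' i ∧ ∀ t, t < i → c t = c' t := by
  classical
  have h := Function.ne_iff.1 hne
  have hpre : ∀ t, t < Nat.find h → c t = c' t := fun t ht => not_not.1 (Nat.find_min h ht)
  refine ⟨Nat.find h, lt_of_le_of_ne ?_ (Nat.find_spec h), hpre⟩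
  have hsum : psum c (Nat.find h) = psum c' (Nat.find h) :=
    Finset.sum_congr rfl fun t ht => hpre t (Finset.mem_range.1 ht)
  have := hle (Nat.find h + 1)
  rw [psum_succ, psum_succ, hsum] at this
  omega

lemma exists_later_gt {c c' : ℕ → ℕ} {i K : ℕ} (hle : Dom c c') (hi : c i < c' i)
    (hpre : ∀ t, t < i → c t = c' t) (htot : ∀ d, K ≤ d → psum c d = psum c' d) :
    ∃ j, i < j ∧ c' j < c j ∧ c (j + 1) ≤ c' (j + 1) ∧
      ∀ d, i < d → d ≤ j → psum c d < psum c' d := by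
  classical
  have hex : ∃ k, i < k ∧ psum c k = psum c' k := ⟨max K (i + 1), by omega, htot _ (by omega)⟩
  have hk := Nat.find_spec hex
  have hstrict : ∀ d, i < d → d < Nat.find hex → psum c d < psum c' d :=
    fun d hid hdk => lt_of_le_of_ne (hle d) fun h => Nat.find_min hex hdk ⟨hid, h⟩
  have hi1 : psum c (i + 1) < psum c' (i + 1) := by
    have hsum : psum c i = psum c' i :=
      Finset.sum_congr rfl fun t ht => hpre t (Finset.mem_range.1 ht)
    rw [psum_succ, psum_succ, hsum]
    omega
  obtain ⟨j, hj⟩ : ∃ j, Nat.find hex = j + 1 := ⟨Nat.find hex - 1, by omega⟩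
  have hmeet : psum c (j + 1) = psum c' (j + 1) := hj ▸ hk.2
  have hij : i < j := lt_of_le_of_ne (by omega) fun hij => hi1.ne (hij ▸ hmeet)
  have hjj := hstrict j hij (by omega)
  have hnext := hle (j + 2)
  rw [psum_succ c (j + 1), psum_succ c' (j + 1), hmeet] at hnext
  rw [psum_succ, psum_succ] at hmeet
  exact ⟨j, hij, by omega, by omega, fun d hid hdj => hstrict d hid (by omega)⟩

theorem incDec_of_adjacent {N K : ℕ} {c c' : ℕ → ℕ} (hc : BlockAntitone N c)
    (hc' : BlockAntitone N c') (hle : Dom c c') (hne : c ≠ c')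
    (htot : ∀ d, K ≤ d → psum c d = psum c' d)
    (hadj : ∀ g, BlockAntitone N g → Dom c g → Dom g c' → g = c ∨ g = c') :
    IncDec c c' := by
  obtain ⟨i, hi, hpre⟩ := exists_first_lt hle hne
  obtain ⟨j, hij, hj, hj1, hstrict⟩ := exists_later_gt hle hi hpre htot
  have hpsum := psum_bump (c := c) hij (by omega)
  have hg : BlockAntitone N (bump c i j) := by
    refine blockAntitone_bump hc hij (fun t hti htN => ?_) fun hjN => ?_
    · have := hc' t htN
      have := hpre t (by omega)
      subst hti
      omega
    · have := hc' j hjN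
      omega
  have hcg : Dom c (bump c i j) := fun d => by
    rw [hpsum]
    omega
  have hgc' : Dom (bump c i j) c' := fun d => by
    rw [hpsum]
    split_ifs with h
    · exact hstrict d h.1 h.2
    · simpa using hle d
  rcases hadj _ hg hcg hgc' with heq | heq
  · have := congrFun heq i
    simp [bump] at this
  · subst heq
    refine ⟨i, j, hij, by simp [bump], ?_, fun t hti htj => by simp [bump, hti, htj]⟩
    simp [bump, hij.ne']
    omega

section concatAt

variable {N : ℕ} {l m : ℕ → ℕ}

lemma concatAt_of_lt {t : ℕ} (ht : t < N) : concatAt N l m t = l t := if_pos ht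

@[simp]
lemma concatAt_add (t : ℕ) : concatAt N l m (N + t) = m t := by
  simp [concatAt]

lemma psum_concatAt_of_le {d : ℕ} (hd : d ≤ N) : psum (concatAt N l m) d = psum l d :=
  Finset.sum_congr rfl fun t ht => concatAt_of_lt (by simp at ht; omega)

lemma psum_concatAt_add (d : ℕ) :
    psum (concatAt N l m) (N + d) = psum l N + psum m d := by
  induction d with
  | zero => exact psum_concatAt_of_le le_rfl
  | succ d ih => rw [← add_assoc, psum_succ, psum_succ, ih, concatAt_add, add_assoc]

lemma concatAt_inj {l' m' : ℕ → ℕ} (hl : ∀ t, N ≤ t → l t = 0) (hl' : ∀ t, N ≤ t → l' t = 0)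
    (h : concatAt N l m = concatAt N l' m') : l = l' ∧ m = m' := by
  refine ⟨funext fun t => ?_, funext fun t => by simpa using congrFun h (N + t)⟩
  rcases Nat.lt_or_ge t N with ht | ht
  · simpa [concatAt_of_lt ht] using congrFun h t
  · rw [hl t ht, hl' t ht]

lemma blockAntitone_concatAt (hl : Antitone l) (hm : Antitone m) :
    BlockAntitone N (concatAt N l m) := by
  intro t ht
  rcases Nat.lt_or_ge t N with htN | htN
  · rw [concatAt_of_lt htN, concatAt_of_lt (by omega)]
    exact hl t.le_succ
  · obtain ⟨s, rfl⟩ := Nat.exists_eq_add_of_le htN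
    rw [show N + s + 1 = N + (s + 1) by omega, concatAt_add, concatAt_add]
    exact hm s.le_succ

lemma psum_concatAt_of_isBip {n : ℕ} (hb : IsBip n l m) (hl : ∀ t, N ≤ t → l t = 0)
    (hm : ∀ t, N ≤ t → m t = 0) {d : ℕ} (hd : N + N ≤ d) : psum (concatAt N l m) d = n := by
  have hc : ∀ t, N + N ≤ t → concatAt N l m t = 0 := fun t ht => by
    simpa [concatAt, show ¬t < N by omega] using hm (t - N) (by omega)
  rw [psum_eq_of_le hc hd, psum_concatAt_add, ← finsum_eq_psum hl, ← finsum_eq_psum hm, hb.2.2.2.2]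

lemma bDom_iff_dom_concatAt {l' m' : ℕ → ℕ} (hl : ∀ t, N ≤ t → l t = 0)
    (hl' : ∀ t, N ≤ t → l' t = 0) :
    BDom l m l' m' ↔ Dom (concatAt N l m) (concatAt N l' m') := by
  rw [BDom, finsum_eq_psum hl, finsum_eq_psum hl']
  refine ⟨fun ⟨hL, hM⟩ d => ?_, fun h => ⟨fun d => ?_, fun d => ?_⟩⟩
  · rcases Nat.le_total d N with hd | hd
    · rw [psum_concatAt_of_le hd, psum_concatAt_of_le hd]
      exact hL d
    · obtain ⟨e, rfl⟩ := Nat.exists_eq_add_of_le hd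
      rw [psum_concatAt_add, psum_concatAt_add]
      exact hM e
  · rcases Nat.le_total d N with hd | hd
    · simpa [psum_concatAt_of_le hd] using h d
    · rw [psum_eq_of_le hl hd, psum_eq_of_le hl' hd]
      simpa [psum_concatAt_of_le le_rfl] using h N
  · simpa [psum_concatAt_add] using h (N + d)

end concatAt

lemma exists_isBip_concatAt {N K n : ℕ} {g : ℕ → ℕ} (hg : BlockAntitone N g)
    (hK : ∀ t, K ≤ t → g t = 0) (hn : psum g K = n) :
    ∃ l m, IsBip n l m ∧ (∀ t, N ≤ t → l t = 0) ∧ concatAt N l m = g := by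
  set l : ℕ → ℕ := fun t => if t < N then g t else 0
  set m : ℕ → ℕ := fun t => g (N + t)
  have hl : ∀ t, N ≤ t → l t = 0 := fun t ht => if_neg (by omega)
  have hm : ∀ t, K ≤ t → m t = 0 := fun t ht => hK _ (by omega)
  have hconcat : concatAt N l m = g := funext fun t => by
    by_cases ht : t < N
    · simp [concatAt, l, ht]
    · simp [concatAt, l, m, ht, show N + (t - N) = t by omega]
  refine ⟨l, m, ⟨antitone_nat_of_succ_le fun t => ?_, antitone_nat_of_succ_le fun t => ?_,
    ⟨N, hl⟩, ⟨K, hm⟩, ?_⟩, hl, hconcat⟩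
  · by_cases ht : t + 1 < N
    · simpa [l, ht, show t < N by omega] using hg t (by omega)
    · simp [l, ht]
  · exact hg (N + t) (by omega)
  · rw [finsum_eq_psum hl, finsum_eq_psum hm, ← psum_concatAt_add, hconcat,
      psum_eq_of_le hK (by omega), hn]

lemma adjacent_concatAt {n N : ℕ} {l m l' m' : ℕ → ℕ} (hb : IsBip n l m) (hb' : IsBip n l' m')
    (hN : ∀ t, N ≤ t → l t = 0 ∧ m t = 0 ∧ l' t = 0 ∧ m' t = 0)
    (hadj : ∀ l'' m'', IsBip n l'' m'' → BDom l m l'' m'' → BDom l'' m'' l' m' →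
      (l'' = l ∧ m'' = m) ∨ (l'' = l' ∧ m'' = m'))
    (g : ℕ → ℕ) (hg : BlockAntitone N g) (hcg : Dom (concatAt N l m) g)
    (hgc' : Dom g (concatAt N l' m')) :
    g = concatAt N l m ∨ g = concatAt N l' m' := by
  have hl : ∀ t, N ≤ t → l t = 0 := fun t ht => (hN t ht).1
  have hl' : ∀ t, N ≤ t → l' t = 0 := fun t ht => (hN t ht).2.2.1
  have hpsum : ∀ d, N + N ≤ d → psum g d = n := fun d hd => by
    have hlow := hcg d
    have hhigh := hgc' d
    rw [psum_concatAt_of_isBip hb hl (fun t ht => (hN t ht).2.1) hd] at hlow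
    rw [psum_concatAt_of_isBip hb' hl' (fun t ht => (hN t ht).2.2.2) hd] at hhigh
    omega
  have hvan : ∀ t, N + N ≤ t → g t = 0 := fun t ht => by
    have := psum_succ g t
    rw [hpsum t ht, hpsum (t + 1) (by omega)] at this
    omega
  obtain ⟨l'', m'', hb'', hl'', rfl⟩ := exists_isBip_concatAt hg hvan (hpsum _ le_rfl)
  rw [← bDom_iff_dom_concatAt hl hl''] at hcg
  rw [← bDom_iff_dom_concatAt hl'' hl'] at hgc'
  rcases hadj l'' m'' hb'' hcg hgc' with ⟨rfl, rfl⟩ | ⟨rfl, rfl⟩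
  exacts [Or.inl rfl, Or.inr rfl]

lemma incDec_concatAt_cases {N : ℕ} {l m l' m' : ℕ → ℕ} (hl : ∀ t, N ≤ t → l t = 0)
    (hl' : ∀ t, N ≤ t → l' t = 0) (h : IncDec (concatAt N l m) (concatAt N l' m')) :
    (m = m' ∧ IncDec l l') ∨ (l = l' ∧ IncDec m m') ∨
      ((∑ᶠ t, l t) < (∑ᶠ t, l' t) ∧ IncOne l l' ∧ IncOne m' m) := by
  obtain ⟨i, j, hij, hi, hj, hrest⟩ := h
  have hL : ∀ t, (t < N → t ≠ i ∧ t ≠ j) → l' t = l t := fun t htij => by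
    rcases Nat.lt_or_ge t N with ht | ht
    · simpa [concatAt_of_lt ht] using hrest t (htij ht).1 (htij ht).2
    · rw [hl t ht, hl' t ht]
  have hM : ∀ t, N + t ≠ i → N + t ≠ j → m' t = m t := fun t hti htj => by
    simpa using hrest (N + t) hti htj
  rcases Nat.lt_or_ge j N with hjN | hjN
  · rw [concatAt_of_lt (hij.trans hjN), concatAt_of_lt (hij.trans hjN)] at hi
    rw [concatAt_of_lt hjN, concatAt_of_lt hjN] at hj
    exact Or.inl ⟨funext fun t => (hM t (by omega) (by omega)).symm, i, j, hij, hi, hj,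
      fun t hti htj => hL t fun _ => ⟨hti, htj⟩⟩
  obtain ⟨b, rfl⟩ := Nat.exists_eq_add_of_le hjN
  rw [concatAt_add, concatAt_add] at hj
  rcases Nat.lt_or_ge i N with hiN | hiN
  · rw [concatAt_of_lt hiN, concatAt_of_lt hiN] at hi
    have hsum : psum l N < psum l' N := Finset.sum_lt_sum
      (fun t ht => by
        rcases eq_or_ne t i with rfl | hti
        · omega
        · rw [hL t fun _ => ⟨hti, by omega⟩])
      ⟨i, Finset.mem_range.2 hiN, by omega⟩
    refine Or.inr (Or.inr ⟨by rwa [finsum_eq_psum hl, finsum_eq_psum hl'], ⟨i, hi, ?_⟩,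
      ⟨b, hj.symm, fun t htb => (hM t (by omega) (by omega)).symm⟩⟩)
    exact fun t hti => hL t fun _ => ⟨hti, by omega⟩
  obtain ⟨a, rfl⟩ := Nat.exists_eq_add_of_le hiN
  rw [concatAt_add, concatAt_add] at hi
  refine Or.inr (Or.inl ⟨funext fun t => (hL t fun _ => ⟨by omega, by omega⟩).symm, a, b,
    by omega, hi, hj, fun t hta htb => hM t (by simpa using hta) (by simpa using htb)⟩)

lemma IncDec.ne {f f' : ℕ → ℕ} (h : IncDec f f') : f ≠ f' := by
  obtain ⟨i, -, -, hi, -⟩ := h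
  exact fun e => by rw [e] at hi; omega

lemma IncOne.ne {f f' : ℕ → ℕ} (h : IncOne f f') : f ≠ f' := by
  obtain ⟨i, hi, -⟩ := h
  exact fun e => by rw [e] at hi; omega

lemma exists_vanish_of_isBip {n : ℕ} {l m l' m' : ℕ → ℕ} (hb : IsBip n l m) (hb' : IsBip n l' m') :
    ∃ N, ∀ t, N ≤ t → l t = 0 ∧ m t = 0 ∧ l' t = 0 ∧ m' t = 0 := by
  obtain ⟨-, -, ⟨N₁, h₁⟩, ⟨N₂, h₂⟩, -⟩ := hb
  obtain ⟨-, -, ⟨N₃, h₃⟩, ⟨N₄, h₄⟩, -⟩ := hb'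
  exact ⟨max (max N₁ N₂) (max N₃ N₄), fun t ht =>
    ⟨h₁ t (by omega), h₂ t (by omega), h₃ t (by omega), h₄ t (by omega)⟩⟩

theorem adjacent_bipartitions_trichotomy (n : ℕ) (l m l' m' : ℕ → ℕ)
    (hb : IsBip n l m) (hb' : IsBip n l' m')
    (hdom : BDom l m l' m') (hne : ¬ (l = l' ∧ m = m'))
    (hadj : ∀ l'' m'', IsBip n l'' m'' → BDom l m l'' m'' → BDom l'' m'' l' m' →
      (l'' = l ∧ m'' = m) ∨ (l'' = l' ∧ m'' = m')) :
    ((m = m' ∧ IncDec l l') ∧ ¬(l = l' ∧ IncDec m m') ∧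
        ¬((∑ᶠ i, l i) < (∑ᶠ i, l' i) ∧ IncOne l l' ∧ IncOne m' m)) ∨
    (¬(m = m' ∧ IncDec l l') ∧ (l = l' ∧ IncDec m m') ∧
        ¬((∑ᶠ i, l i) < (∑ᶠ i, l' i) ∧ IncOne l l' ∧ IncOne m' m)) ∨
    (¬(m = m' ∧ IncDec l l') ∧ ¬(l = l' ∧ IncDec m m') ∧
        ((∑ᶠ i, l i) < (∑ᶠ i, l' i) ∧ IncOne l l' ∧ IncOne m' m)) := by
  obtain ⟨N, hN⟩ := exists_vanish_of_isBip hb hb'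
  have hl : ∀ t, N ≤ t → l t = 0 := fun t ht => (hN t ht).1
  have hl' : ∀ t, N ≤ t → l' t = 0 := fun t ht => (hN t ht).2.2.1
  have hstep : IncDec (concatAt N l m) (concatAt N l' m') :=
    incDec_of_adjacent (blockAntitone_concatAt hb.1 hb.2.1) (blockAntitone_concatAt hb'.1 hb'.2.1)
      ((bDom_iff_dom_concatAt hl hl').1 hdom) (fun h => hne (concatAt_inj hl hl' h))
      (fun d hd => by
        rw [psum_concatAt_of_isBip hb hl (fun t ht => (hN t ht).2.1) hd,
          psum_concatAt_of_isBip hb' hl' (fun t ht => (hN t ht).2.2.2) hd])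
      (adjacent_concatAt hb hb' hN hadj)
  rcases incDec_concatAt_cases hl hl' hstep with ⟨hmm, hL⟩ | ⟨hll, hM⟩ | ⟨hlt, hL, hM⟩
  · exact Or.inl ⟨⟨hmm, hL⟩, fun h => hL.ne h.1, fun h => h.2.2.ne hmm.symm⟩
  · exact Or.inr (Or.inl ⟨fun h => h.2.ne hll, ⟨hll, hM⟩, fun h => h.2.1.ne hll⟩)
  · exact Or.inr (Or.inr ⟨fun h => hM.ne h.1.symm, fun h => hL.ne h.1, hlt, hL, hM⟩)
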